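/- arXiv:math/0503527 — 2 statements merged into one kernel-verified Lean document; each statement's English description precedes it below -/
import Mathlib

section
/- For all n ≥ 1, all i, j ∈ E and all t ∈ ℝ, the n-fold convolution of F satisfies F^{(n)}_{ij}(t) = E_j[(Φ_1⋯Φ_n)^κ 1_{log(Φ_1⋯Φ_n) ≤ t} 1_{X_n = i}]. -/
open MeasureTheory ProbabilityTheory Filter

noncomputable section

/-- Spectral radius of a real square matrix: the largest modulus of a complex root of
its characteristic polynomial. -/
def specRad {N : ℕ} (M : Matrix (Fin N) (Fin N) ℝ) : ℝ :=
  sSup {r : ℝ | ∃ z : ℂ, (M.map (Complex.ofReal ·)).charpoly.IsRoot z ∧ r = ‖z‖}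

/-- The setting of de Saporta and Yao "Tail of a linear diffusion with Markov switching":
a stationary Markov jump process `X` on `E = Fin N` (`N > 1`), with positive intensity
function `lam`, irreducible jump kernel `q` vanishing on the diagonal, invariant probability
vector `μ` (`μ Q = 0` for the generator `Q i j = lam i * (q i j - δ_{ij})`), right-continuous
step sample paths, transition semigroup `exp(tQ)` and marginal law `μ` at every time,
together with a coefficient function `a : E → ℝ`. -/
structure MSS (N : ℕ) (Ω : Type*) [MeasurableSpace Ω] where
  hN : 1 < N
  lam : Fin N → ℝ
  hlam : ∀ i, 0 < lam i
  q : Matrix (Fin N) (Fin N) ℝ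
  hq_nonneg : ∀ i j, 0 ≤ q i j
  hq_row : ∀ i, ∑ j, q i j = 1
  hq_diag : ∀ i, q i i = 0
  hq_irred : ∀ i j, ∃ k, 1 ≤ k ∧ 0 < (q ^ k) i j
  μ : Fin N → ℝ
  hμ_pos : ∀ i, 0 < μ i
  hμ_sum : ∑ i, μ i = 1
  hμ_inv : ∀ j, ∑ i, μ i * (lam i * (q i j - if i = j then 1 else 0)) = 0
  a : Fin N → ℝ
  P : Measure Ω
  hP : IsProbabilityMeasure P
  X : ℝ → Ω → Fin N
  hX_meas : ∀ t, Measurable (X t)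
  hX_rightcont : ∀ ω t, ∃ ε > 0, ∀ u ∈ Set.Ico t (t + ε), X u ω = X t ω
  hX_stationary : ∀ (h : ℝ) (n : ℕ) (ts : Fin n → ℝ) (is : Fin n → Fin N),
      P {ω | ∀ k, X (ts k + h) ω = is k} = P {ω | ∀ k, X (ts k) ω = is k}
  hX_marginal : ∀ t i, P {ω | X t ω = i} = ENNReal.ofReal (μ i)
  hX_markov : ∀ s t : ℝ, s ≤ t → ∀ f : Fin N → ℝ,
      (P[(fun ω => f (X t ω)) | ⨆ u ∈ Set.Iic s, MeasurableSpace.comap (X u) ⊤])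
        =ᵐ[P] fun ω =>
          ∑ j, (NormedSpace.exp ((t - s) •
              (Matrix.of fun i j => lam i * (q i j - if i = j then 1 else 0)))) (X s ω) j * f j

namespace MSS

variable {N : ℕ} {Ω : Type*} [MeasurableSpace Ω] (S : MSS N Ω)

/-- `Φ(s,t) = exp ∫_s^t a(X_u) du`. -/
def Phi (s t : ℝ) (ω : Ω) : ℝ := Real.exp (∫ u in s..t, S.a (S.X u ω))

/-- The conditional law `P_i = P_μ(· | X_0 = i)`. -/
def condP (i : Fin N) : Measure Ω := S.P[|{ω | S.X 0 ω = i}]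

/-- The matrix `A_{(s,δ)}` with entries `(A_{(s,δ)})_{ij} = E_i[Φ(0,δ)^s 1_{X_δ = j}]`. -/
def A (s δ : ℝ) : Matrix (Fin N) (Fin N) ℝ :=
  Matrix.of fun i j => ∫ ω in {ω | S.X δ ω = j}, (S.Phi 0 δ ω) ^ s ∂(S.condP i)

/-- `s₁ = min {λ(i)/a(i) : i ∈ E, a(i) > 0}`. -/
def s1 : ℝ := sInf {r : ℝ | ∃ i, 0 < S.a i ∧ r = S.lam i / S.a i}

/-- The matrix `M_s` with entries `(M_s)_{ij} = q(i,j) λ(i)/(λ(i) - s a(i))`. -/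
def M (s : ℝ) : Matrix (Fin N) (Fin N) ℝ :=
  Matrix.of fun i j => S.q i j * S.lam i / (S.lam i - s * S.a i)

end MSS

/-- The setting extended with a volatility function `sig : E → ℝ` and an i.i.d. standard
Gaussian sequence `(ξ_n)_{n ∈ ℤ}` independent of `X`. -/
structure MSSN (N : ℕ) (Ω : Type*) [MeasurableSpace Ω] extends MSS N Ω where
  sig : Fin N → ℝ
  ξ : ℤ → Ω → ℝ
  hξ_meas : ∀ n, Measurable (ξ n)
  hξ_law : ∀ n, P.map (ξ n) = gaussianReal 0 1
  hξ_iid : iIndepFun ξ P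
  hξ_indepX : Indep (⨆ n : ℤ, MeasurableSpace.comap (ξ n) inferInstance)
      (⨆ t : ℝ, MeasurableSpace.comap (X t) ⊤) P

namespace MSSN

variable {N : ℕ} {Ω : Type*} [MeasurableSpace Ω] (S : MSSN N Ω)

/-- `V_n = ∫_{n-1}^n exp(2 ∫_u^n a(X_v) dv) σ(X_u)² du`. -/
def V (n : ℤ) (ω : Ω) : ℝ :=
  ∫ u in ((n : ℝ) - 1)..(n : ℝ),
    Real.exp (2 * ∫ v in u..(n : ℝ), S.a (S.X v ω)) * (S.sig (S.X u ω)) ^ 2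

/-- `b_n = V_n^{1/2} ξ_n`. -/
def b (n : ℤ) (ω : Ω) : ℝ := Real.sqrt (S.V n ω) * S.ξ n ω

/-- `Φ_n = Φ(n-1, n)`. -/
def Phin (n : ℤ) (ω : Ω) : ℝ := S.toMSS.Phi ((n : ℝ) - 1) (n : ℝ) ω

/-- `Π_n = Φ_1 Φ_0 ⋯ Φ_{2-n}` (with `Π_0 = 1`). -/
def Pi (n : ℕ) (ω : Ω) : ℝ := ∏ k ∈ Finset.range n, S.Phin (1 - k) ω

/-- The partial sum `R_1^n = ∑_{k=0}^{n-1} Π_k b_{1-k}` (with `R_1^0 = 0`). -/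
def R1part (n : ℕ) (ω : Ω) : ℝ := ∑ k ∈ Finset.range n, S.Pi k ω * S.b (1 - k) ω

/-- `R_1 = ∑_{k=0}^∞ Φ_1 Φ_0 ⋯ Φ_{2-k} b_{1-k}`, the stationary solution at time 1. -/
def R1 (ω : Ω) : ℝ := ∑' k : ℕ, S.Pi k ω * S.b (1 - k) ω

/-- `ν`, the law of `R_1` under `P_μ`: the stationary law of the Markov-switching
diffusion `dY_t = a(X_t) Y_t dt + σ(X_t) dW_t`. -/
def ν : Measure ℝ := S.P.map S.R1

end MSSN

/-- `m` is a median of `Z` conditionally on the event `B`: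
`P(Z ≤ m | B) ≥ 1/2` and `P(Z ≥ m | B) ≥ 1/2`. -/
def IsCondMedian {Ω : Type*} [MeasurableSpace Ω] (P : Measure Ω) (B : Set Ω)
    (Z : Ω → ℝ) (m : ℝ) : Prop :=
  1/2 ≤ P[|B] {ω | Z ω ≤ m} ∧ 1/2 ≤ P[|B] {ω | m ≤ Z ω}

/-- The matrix of finite measures `F` whose distribution functions are
`F_{ij}(t) = E_j[Φ_1^κ 1_{X_1 = i} 1_{log Φ_1 ≤ t}]`. -/
def Fmeas {N : ℕ} {Ω : Type*} [MeasurableSpace Ω] (S : MSS N Ω) (κ : ℝ)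
    (i j : Fin N) : Measure ℝ :=
  Measure.map (fun ω => Real.log (S.Phi 0 1 ω))
    (((S.condP j).restrict {ω | S.X 1 ω = i}).withDensity
      fun ω => ENNReal.ofReal ((S.Phi 0 1 ω) ^ κ))

/-- The `n`-fold convolution `F^{(n)}`: `F^{(0)}_{ij} = δ_{ij} · (unit mass at 0)` and
`F^{(n)}_{ij} = ∑_k F_{ik} ∗ F^{(n-1)}_{kj}`. -/
def Fn {N : ℕ} {Ω : Type*} [MeasurableSpace Ω] (S : MSS N Ω) (κ : ℝ) :
    ℕ → Fin N → Fin N → Measure ℝ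
  | 0 => fun i j => if i = j then Measure.dirac 0 else 0
  | (n + 1) => fun i j => ∑ k, (Fmeas S κ i k).conv (Fn S κ n k j)

/-!
Write `L_{s,t}(k,i)` (`MSS.intALaw`) for the law of `∫_s^t a(X_u) du` on the event
`{X_s = k, X_t = i}`.
Given `X_n = k`, the Markov property makes the path before and after time `n` independent, and
stationarity identifies `L_{n,n+1}` with `L_{0,1}`; hence
`L_{0,n+1}(j,i) = ∑_k μ_k⁻¹ • L_{0,1}(k,i) ∗ L_{0,n}(j,k)`. Tilting by `e^{κx}` commutes with
convolution, so by induction `F^{(n)}_{ij} = μ_j⁻¹ • e^{κx} L_{0,n}(j,i)`, which is the claim.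
The Markov property and stationarity are only given at finitely many times; they reach the
integral through right-endpoint Riemann sums, which converge pathwise by right-continuity, and
through the π-system of cylinder events.
-/

open Set Topology Interval BoundedContinuousFunction
open scoped ENNReal NNReal

section ceilGrid

def ceilGrid (s δ u : ℝ) : ℝ := s + ⌈(u - s) / δ⌉ * δ

lemma measurable_comp_ceilGrid {β : Type*} [MeasurableSpace β] (g : ℝ → β) (s δ : ℝ) :
    Measurable fun u => g (ceilGrid s δ u) :=
  (measurable_of_countable fun z : ℤ => g (s + z * δ)).comp
    (Int.measurable_ceil.comp ((measurable_id.sub_const s).div_const δ))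

variable {δ : ℝ} (hδ : 0 < δ)
include hδ

lemma ceilGrid_mem_Ico (s u : ℝ) : ceilGrid s δ u ∈ Set.Ico u (u + δ) := by
  have h₁ := (div_le_iff₀ hδ).1 (Int.le_ceil ((u - s) / δ))
  have h₂ := mul_lt_mul_of_pos_right (Int.ceil_lt_add_one ((u - s) / δ)) hδ
  rw [add_mul, div_mul_cancel₀ _ hδ.ne'] at h₂
  constructor <;> simp only [ceilGrid] <;> nlinarith

lemma ceilGrid_eq_of_mem_Ioc {s u : ℝ} {r : ℤ} (hu : u ∈ Set.Ioc (s + (r - 1) * δ) (s + r * δ)) :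
    ceilGrid s δ u = s + r * δ := by
  rw [ceilGrid, Int.ceil_eq_iff.2 ⟨(lt_div_iff₀ hδ).2 (by linarith [hu.1]),
    (div_le_iff₀ hδ).2 (by linarith [hu.2])⟩]

lemma integral_comp_ceilGrid {E : Type*} [NormedAddCommGroup E] [NormedSpace ℝ E]
    [CompleteSpace E] (f : ℝ → E) (s : ℝ) (n : ℕ) :
    ∫ u in s..s + n * δ, f (ceilGrid s δ u) = ∑ r ∈ Finset.range n, δ • f (s + (r + 1) * δ) := by
  have hae : ∀ r : ℕ, ∀ u ∈ Ι (s + r * δ) (s + (r + 1 : ℕ) * δ),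
      f (ceilGrid s δ u) = f (s + (r + 1) * δ) := by
    intro r u hu
    rw [uIoc_of_le (by push_cast; nlinarith)] at hu
    have := ceilGrid_eq_of_mem_Ioc hδ (r := r + 1) (by push_cast at hu ⊢; simpa using hu)
    push_cast at this
    rw [this]
  have hint : ∀ r < n, IntervalIntegrable (fun u => f (ceilGrid s δ u)) volume
      (s + r * δ) (s + (r + 1 : ℕ) * δ) := fun r _ =>
    intervalIntegrable_const.congr_ae
      ((ae_restrict_iff' measurableSet_uIoc).2 (.of_forall fun u hu => (hae r u hu).symm))
  have := intervalIntegral.sum_integral_adjacent_intervals hint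
  simp only [CharP.cast_eq_zero, zero_mul, add_zero] at this
  rw [← this]
  refine Finset.sum_congr rfl fun r _ => ?_
  rw [intervalIntegral.integral_congr_ae (.of_forall (hae r)), intervalIntegral.integral_const]
  congr 1
  push_cast
  ring

end ceilGrid

section LimitLaws

variable {α β E : Type*} [MeasurableSpace α] [MeasurableSpace β]
  [TopologicalSpace E] [MeasurableSpace E]

lemma BoundedContinuousFunction.tendsto_lintegral_comp [OpensMeasurableSpace E] (φ : E →ᵇ ℝ≥0)
    {μ : Measure α} [IsFiniteMeasure μ] {f : ℕ → α → E} {F : α → E}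
    (hf : ∀ m, Measurable (f m)) (hF : ∀ x, Tendsto (f · x) atTop (𝓝 (F x))) :
    Tendsto (fun m => ∫⁻ x, φ (f m x) ∂μ) atTop (𝓝 (∫⁻ x, φ (F x) ∂μ)) :=
  tendsto_lintegral_of_dominated_convergence (fun _ => nndist 0 φ)
    (fun m => φ.measurable_coe_ennreal_comp.comp (hf m))
    (fun m => .of_forall fun x => ENNReal.coe_le_coe.2 (φ.apply_le_nndist_zero _))
    (by simp [lintegral_const, ENNReal.mul_eq_top])
    (.of_forall fun x =>
      (ENNReal.continuous_coe.tendsto _).comp ((φ.continuous.tendsto _).comp (hF x)))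

lemma MeasureTheory.Measure.map_eq_map_of_tendsto [TopologicalSpace.PseudoMetrizableSpace E]
    [BorelSpace E] {μ : Measure α} {ν : Measure β} [IsFiniteMeasure μ] [IsFiniteMeasure ν]
    {f : ℕ → α → E} {g : ℕ → β → E} {F : α → E} {G : β → E}
    (hf : ∀ m, Measurable (f m)) (hg : ∀ m, Measurable (g m))
    (hF : ∀ x, Tendsto (f · x) atTop (𝓝 (F x))) (hG : ∀ y, Tendsto (g · y) atTop (𝓝 (G y)))
    (h : ∀ m, μ.map (f m) = ν.map (g m)) :
    μ.map F = ν.map G := by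
  have hFm := measurable_of_tendsto_metrizable hf (tendsto_pi_nhds.2 hF)
  have hGm := measurable_of_tendsto_metrizable hg (tendsto_pi_nhds.2 hG)
  refine ext_of_forall_lintegral_eq_of_IsFiniteMeasure fun φ => ?_
  rw [lintegral_map φ.measurable_coe_ennreal_comp hFm,
    lintegral_map φ.measurable_coe_ennreal_comp hGm]
  refine tendsto_nhds_unique (φ.tendsto_lintegral_comp hf hF) ?_
  simpa only [← lintegral_map φ.measurable_coe_ennreal_comp (hf _),
    ← lintegral_map φ.measurable_coe_ennreal_comp (hg _), h] using φ.tendsto_lintegral_comp hg hG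

end LimitLaws

section ExpTilt

lemma map_withDensity_comp {α β : Type*} [MeasurableSpace α] [MeasurableSpace β] (μ : Measure α)
    {f : α → β} (hf : Measurable f) {w : β → ℝ≥0∞} (hw : Measurable w) :
    (μ.withDensity (w ∘ f)).map f = (μ.map f).withDensity w := by
  ext s hs
  rw [Measure.map_apply hf hs, withDensity_apply _ (hf hs), withDensity_apply _ hs,
    setLIntegral_map hs hw hf, Function.comp_def]

def expTilt (κ : ℝ) (ν : Measure ℝ) : Measure ℝ :=
  ν.withDensity fun x => ENNReal.ofReal (Real.exp (κ * x))

variable (κ : ℝ)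

instance sFinite_expTilt (ν : Measure ℝ) [SFinite ν] : SFinite (expTilt κ ν) := by
  unfold expTilt; infer_instance

lemma measurable_ofReal_exp_mul : Measurable fun x : ℝ => ENNReal.ofReal (Real.exp (κ * x)) := by
  fun_prop

lemma expTilt_smul (c : ℝ≥0∞) (ν : Measure ℝ) : expTilt κ (c • ν) = c • expTilt κ ν :=
  withDensity_smul_measure c _

lemma expTilt_sum {ι : Type*} [Fintype ι] (ν : ι → Measure ℝ) :
    expTilt κ (∑ i, ν i) = ∑ i, expTilt κ (ν i) := by
  rw [expTilt, ← Measure.sum_fintype, withDensity_sum, Measure.sum_fintype]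
  rfl

lemma expTilt_dirac_zero : expTilt κ (Measure.dirac 0) = Measure.dirac 0 := by
  simp [expTilt, dirac_withDensity]

lemma expTilt_conv (μ ν : Measure ℝ) [SFinite μ] [SFinite ν] :
    expTilt κ (μ ∗ ν) = expTilt κ μ ∗ expTilt κ ν := by
  have hw : (fun x : ℝ => ENNReal.ofReal (Real.exp (κ * x))) ∘ (fun z : ℝ × ℝ => z.1 + z.2)
      = fun z => ENNReal.ofReal (Real.exp (κ * z.1)) * ENNReal.ofReal (Real.exp (κ * z.2)) := by
    ext z
    rw [Function.comp_apply, ← ENNReal.ofReal_mul (Real.exp_nonneg _), ← Real.exp_add, mul_add]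
  rw [expTilt, Measure.conv, ← map_withDensity_comp _ measurable_add (measurable_ofReal_exp_mul κ),
    hw, ← prod_withDensity (measurable_ofReal_exp_mul κ) (measurable_ofReal_exp_mul κ)]
  rfl

end ExpTilt

namespace MSS

variable {N : ℕ} {Ω : Type*} [MeasurableSpace Ω] (S : MSS N Ω)

abbrev sigmaOn (I : Set ℝ) : MeasurableSpace Ω := ⨆ u ∈ I, MeasurableSpace.comap (S.X u) ⊤

lemma sigmaOn_le (I : Set ℝ) : S.sigmaOn I ≤ ‹MeasurableSpace Ω› :=
  iSup₂_le fun u _ => (S.hX_meas u).comap_le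

lemma sigmaOn_mono {I J : Set ℝ} (h : I ⊆ J) : S.sigmaOn I ≤ S.sigmaOn J :=
  iSup₂_le fun u hu => le_iSup₂ (f := fun u (_ : u ∈ J) => MeasurableSpace.comap (S.X u) ⊤) u (h hu)

lemma measurable_X_sigmaOn {I : Set ℝ} {t : ℝ} (ht : t ∈ I) : Measurable[S.sigmaOn I] (S.X t) :=
  Measurable.of_comap_le (le_iSup₂ (f := fun u (_ : u ∈ I) => MeasurableSpace.comap (S.X u) ⊤) t ht)

lemma measurableSet_sigmaOn_X_eq {I : Set ℝ} {t : ℝ} (ht : t ∈ I) (i : Fin N) :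
    MeasurableSet[S.sigmaOn I] {ω | S.X t ω = i} :=
  S.measurable_X_sigmaOn ht (measurableSet_singleton i)

lemma measurableSet_X_eq (t : ℝ) (i : Fin N) : MeasurableSet {ω | S.X t ω = i} :=
  S.hX_meas t (measurableSet_singleton i)

def transition (d : ℝ) : Matrix (Fin N) (Fin N) ℝ :=
  NormedSpace.exp (d • Matrix.of fun i j => S.lam i * (S.q i j - if i = j then 1 else 0))

lemma measureReal_inter_X_eq {s t : ℝ} (hst : s ≤ t) {A : Set Ω}
    (hA : MeasurableSet[S.sigmaOn (Iic s)] A) {c : Fin N} (hAc : A ⊆ {ω | S.X s ω = c})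
    (d : Fin N) :
    S.P.real (A ∩ {ω | S.X t ω = d}) = S.transition (t - s) c d * S.P.real A := by
  have := S.hP
  let f : Fin N → ℝ := fun x => if x = d then 1 else 0
  have hf : (fun ω => f (S.X t ω)) = {ω | S.X t ω = d}.indicator 1 := by
    ext ω; simp [f, Set.indicator_apply]
  have hint : Integrable (fun ω => f (S.X t ω)) S.P := by
    rw [hf]; exact (integrable_const 1).indicator (S.measurableSet_X_eq t d)
  calc S.P.real (A ∩ {ω | S.X t ω = d})
      = ∫ ω in A, f (S.X t ω) ∂S.P := by
        rw [hf, setIntegral_indicator (S.measurableSet_X_eq t d)]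
        simp
    _ = ∫ ω in A, (S.P[fun ω => f (S.X t ω) | S.sigmaOn (Iic s)]) ω ∂S.P :=
        (setIntegral_condExp (S.sigmaOn_le _) hint hA).symm
    _ = ∫ _ in A, S.transition (t - s) c d ∂S.P := by
        refine setIntegral_congr_ae (S.sigmaOn_le _ A hA) ((S.hX_markov s t hst f).mono
          fun ω hω hωA => ?_)
        have hc : S.X s ω = c := hAc hωA
        simp [hω, hc, f, transition]
    _ = S.transition (t - s) c d * S.P.real A := by rw [setIntegral_const, smul_eq_mul, mul_comm]

def cyl (T : Finset ℝ) (g : ℝ → Fin N) : Set Ω := {ω | ∀ t ∈ T, S.X t ω = g t}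

lemma cyl_insert [DecidableEq ℝ] (a : ℝ) (T : Finset ℝ) (g : ℝ → Fin N) :
    S.cyl (insert a T) g = S.cyl T g ∩ {ω | S.X a ω = g a} := by
  ext ω; simp [cyl, and_comm]

lemma measurableSet_cyl {I : Set ℝ} {T : Finset ℝ} (hT : ↑T ⊆ I) (g : ℝ → Fin N) :
    MeasurableSet[S.sigmaOn I] (S.cyl T g) := by
  have : S.cyl T g = ⋂ t ∈ T, {ω | S.X t ω = g t} := by ext; simp [cyl]
  rw [this]
  exact Finset.measurableSet_biInter T fun t ht =>
    S.measurable_X_sigmaOn (hT ht) (measurableSet_singleton _)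

def cylinders (I : Set ℝ) : Set (Set Ω) :=
  {B | ∃ (T : Finset ℝ) (g : ℝ → Fin N), ↑T ⊆ I ∧ B = S.cyl T g}

lemma isPiSystem_cylinders (I : Set ℝ) : IsPiSystem (S.cylinders I) := by
  classical
  rintro _ ⟨T₁, g₁, h₁, rfl⟩ _ ⟨T₂, g₂, h₂, rfl⟩ ⟨ω, hω₁, hω₂⟩
  refine ⟨T₁ ∪ T₂, fun t => if t ∈ T₁ then g₁ t else g₂ t, by simp [h₁, h₂], ?_⟩
  ext ω'
  simp only [cyl, mem_inter_iff, mem_ofPred_eq, Finset.mem_union]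
  constructor
  · rintro ⟨H₁, H₂⟩ t ht
    split_ifs with h
    exacts [H₁ t h, H₂ t (ht.resolve_left h)]
  · intro H
    refine ⟨fun t ht => by simpa [ht] using H t (.inl ht), fun t ht => ?_⟩
    by_cases h : t ∈ T₁
    · simpa [h, (hω₁ t h).symm.trans (hω₂ t ht)] using H t (.inl h)
    · simpa [h] using H t (.inr ht)

lemma sigmaOn_eq_generateFrom (I : Set ℝ) :
    S.sigmaOn I = MeasurableSpace.generateFrom (S.cylinders I) := by
  refine le_antisymm (iSup₂_le fun u hu => ?_) (MeasurableSpace.generateFrom_le ?_)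
  · rintro _ ⟨B, -, rfl⟩
    have : S.X u ⁻¹' B = ⋃ b ∈ B, S.cyl {u} (fun _ => b) := by ext; simp [cyl]
    rw [this]
    exact .biUnion B.to_countable fun b _ =>
      MeasurableSpace.measurableSet_generateFrom ⟨{u}, fun _ => b, by simpa using hu, rfl⟩
  · rintro _ ⟨T, g, hT, rfl⟩
    exact S.measurableSet_cyl hT g

lemma measureReal_inter_cyl_mul {s : ℝ} {k : Fin N} {A : Set Ω}
    (hA : MeasurableSet[S.sigmaOn (Iic s)] A) (hAk : A ⊆ {ω | S.X s ω = k})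
    (T : Finset ℝ) (hT : ↑T ⊆ Ici s) (g : ℝ → Fin N) :
    S.P.real (A ∩ S.cyl T g) * S.P.real {ω | S.X s ω = k}
      = S.P.real A * S.P.real ({ω | S.X s ω = k} ∩ S.cyl T g) := by
  classical
  induction T using Finset.induction_on_max with
  | empty => simp [cyl]
  | insert a T haT ih =>
    have hT' : ↑T ⊆ Ici s := fun t ht => hT (by simp [Finset.mem_coe.1 ht])
    obtain ⟨m, c, hsm, hma, hTm, hc⟩ : ∃ m c, s ≤ m ∧ m ≤ a ∧ ↑T ⊆ Iic m ∧
        {ω | S.X s ω = k} ∩ S.cyl T g ⊆ {ω | S.X m ω = c} := by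
      rcases T.eq_empty_or_nonempty with rfl | hne
      · exact ⟨s, k, le_rfl, hT (by simp), by simp, fun ω hω => hω.1⟩
      · exact ⟨T.max' hne, g (T.max' hne), hT' (T.max'_mem hne), (haT _ (T.max'_mem hne)).le,
          fun t ht => T.le_max' t ht, fun ω hω => hω.2 _ (T.max'_mem hne)⟩
    have hpast : ∀ B, MeasurableSet[S.sigmaOn (Iic s)] B →
        MeasurableSet[S.sigmaOn (Iic m)] (B ∩ S.cyl T g) := fun B hB =>
      (S.sigmaOn_mono (Iic_subset_Iic.2 hsm) _ hB).inter (S.measurableSet_cyl hTm g)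
    have hA' := S.measureReal_inter_X_eq hma (hpast A hA) (c := c)
      (fun ω hω => hc ⟨hAk hω.1, hω.2⟩) (g a)
    have hC' := S.measureReal_inter_X_eq hma
      (hpast _ (S.measurableSet_sigmaOn_X_eq (mem_Iic.2 le_rfl) k)) hc (g a)
    rw [S.cyl_insert, ← inter_assoc, ← inter_assoc, hA', hC', mul_assoc, ih hT']
    ring

-- The Markov property at time `s`: given `X_s = k`, the past and the future are independent.
lemma measure_inter_inter_mul {s : ℝ} (k : Fin N) {A B : Set Ω}
    (hA : MeasurableSet[S.sigmaOn (Iic s)] A) (hB : MeasurableSet[S.sigmaOn (Ici s)] B) :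
    S.P ({ω | S.X s ω = k} ∩ A ∩ B) * S.P {ω | S.X s ω = k}
      = S.P ({ω | S.X s ω = k} ∩ A) * S.P ({ω | S.X s ω = k} ∩ B) := by
  have := S.hP
  set C := {ω | S.X s ω = k}
  have hC : MeasurableSet[S.sigmaOn (Iic s)] C := S.measurableSet_sigmaOn_X_eq (mem_Iic.2 le_rfl) k
  have : IsFiniteMeasure (S.P C • S.P.restrict (C ∩ A)) :=
    ⟨by simp [ENNReal.mul_lt_top, measure_lt_top]⟩
  have key := ext_on_measurableSpace_of_generate_finite _
    (μ := S.P C • S.P.restrict (C ∩ A)) (ν := S.P (C ∩ A) • S.P.restrict C)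
    (S.cylinders (Ici s)) ?_ (S.sigmaOn_le _) (S.sigmaOn_eq_generateFrom _)
    (S.isPiSystem_cylinders _) (by simp [mul_comm]) hB
  · simpa [Measure.restrict_apply (S.sigmaOn_le _ B hB), inter_comm B, mul_comm] using key
  · rintro _ ⟨T, g, hT, rfl⟩
    have h := S.measureReal_inter_cyl_mul (hC.inter hA) inter_subset_left T hT g
    simp only [Measure.smul_apply, smul_eq_mul,
      Measure.restrict_apply (S.sigmaOn_le _ _ (S.measurableSet_cyl hT g)), inter_comm (S.cyl T g)]
    apply (ENNReal.toReal_eq_toReal_iff' (by finiteness) (by finiteness)).mp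
    simpa only [ENNReal.toReal_mul, ← measureReal_def, mul_comm] using h

def intA (s t : ℝ) (ω : Ω) : ℝ := ∫ u in s..t, S.a (S.X u ω)

lemma abs_a_le_sum (i : Fin N) : |S.a i| ≤ ∑ j, |S.a j| :=
  Finset.single_le_sum (f := fun j => |S.a j|) (fun _ _ => abs_nonneg _) (Finset.mem_univ i)

lemma eventually_X_ceilGrid (ω : Ω) (s u : ℝ) {δ : ℕ → ℝ} (hδ : ∀ m, 0 < δ m)
    (hδ₀ : Tendsto δ atTop (𝓝 0)) :
    ∀ᶠ m in atTop, S.X (ceilGrid s (δ m) u) ω = S.X u ω := by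
  obtain ⟨ε, hε, hconst⟩ := S.hX_rightcont ω u
  filter_upwards [hδ₀.eventually (gt_mem_nhds hε)] with m hm
  have h := ceilGrid_mem_Ico (hδ m) s u
  exact hconst _ ⟨h.1, h.2.trans (by linarith)⟩

lemma measurable_a_X (ω : Ω) : Measurable fun u => S.a (S.X u ω) :=
  measurable_of_tendsto_metrizable
    (fun m => measurable_comp_ceilGrid (fun v => S.a (S.X v ω)) 0 (1 / (m + 1)))
    (tendsto_pi_nhds.2 fun u => tendsto_const_nhds.congr' <|
      (S.eventually_X_ceilGrid ω 0 u (fun m => by positivity)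
        tendsto_one_div_add_atTop_nhds_zero_nat).mono fun m hm => by simp only [hm])

lemma intervalIntegrable_a_X (ω : Ω) (s t : ℝ) :
    IntervalIntegrable (fun u => S.a (S.X u ω)) volume s t :=
  intervalIntegrable_const.mono_fun' (S.measurable_a_X ω).aestronglyMeasurable
    (.of_forall fun u => S.abs_a_le_sum (S.X u ω))

lemma intA_add (r s t : ℝ) (ω : Ω) : S.intA r s ω + S.intA s t ω = S.intA r t ω :=
  intervalIntegral.integral_add_adjacent_intervals (S.intervalIntegrable_a_X ω r s)
    (S.intervalIntegrable_a_X ω s t)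

lemma log_Phi (s t : ℝ) (ω : Ω) : Real.log (S.Phi s t ω) = S.intA s t ω :=
  Real.log_exp _

lemma prod_Phi (n : ℕ) (ω : Ω) :
    ∏ m ∈ Finset.range n, S.Phi m (m + 1) ω = S.Phi 0 n ω := by
  induction n with
  | zero => simp [Phi]
  | succ n ih =>
    rw [Finset.prod_range_succ, ih, Phi, Phi, Phi, ← Real.exp_add]
    exact congrArg Real.exp (by push_cast; exact S.intA_add 0 n (n + 1) ω)

-- Index `0` is `X_s` and index `m + 1` is `X_t`, so the endpoint events are read off the grid too.
def gridX (s t : ℝ) (m : ℕ) (ω : Ω) : Fin (m + 2) → Fin N :=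
  fun r => S.X (s + r * ((t - s) / (m + 1))) ω

def riemannA (δ : ℝ) {m : ℕ} (g : Fin (m + 2) → Fin N) : ℝ :=
  ∑ r : Fin (m + 1), δ * S.a (g r.succ)

lemma riemannA_gridX_eq_integral {s t : ℝ} (hst : s < t) (m : ℕ) (ω : Ω) :
    S.riemannA ((t - s) / (m + 1)) (S.gridX s t m ω)
      = ∫ u in s..t, S.a (S.X (ceilGrid s ((t - s) / (m + 1)) u) ω) := by
  have hδ : 0 < (t - s) / (m + 1) := div_pos (sub_pos.2 hst) m.cast_add_one_pos
  have h := integral_comp_ceilGrid hδ (fun u => S.a (S.X u ω)) s (m + 1)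
  rw [show s + ((m + 1 : ℕ) : ℝ) * ((t - s) / (m + 1)) = t by push_cast; field_simp; ring] at h
  rw [h, ← Fin.sum_univ_eq_sum_range]
  simp [riemannA, gridX]

lemma tendsto_riemannA_gridX {s t : ℝ} (hst : s ≤ t) (ω : Ω) :
    Tendsto (fun m : ℕ => S.riemannA ((t - s) / (m + 1)) (S.gridX s t m ω)) atTop
      (𝓝 (S.intA s t ω)) := by
  rcases hst.eq_or_lt with rfl | hst
  · simp only [sub_self, zero_div, riemannA, zero_mul, Finset.sum_const_zero, intA,
      intervalIntegral.integral_same, tendsto_const_nhds]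
  have hδ : ∀ m : ℕ, 0 < (t - s) / (m + 1) := fun m => div_pos (sub_pos.2 hst) m.cast_add_one_pos
  have hδ₀ : Tendsto (fun m : ℕ => (t - s) / (m + 1)) atTop (𝓝 0) := by
    simpa only [mul_zero, mul_one_div] using
      tendsto_one_div_add_atTop_nhds_zero_nat.const_mul (t - s)
  simp only [S.riemannA_gridX_eq_integral hst]
  refine intervalIntegral.tendsto_integral_filter_of_dominated_convergence (fun _ => ∑ j, |S.a j|)
    (.of_forall fun m =>
      (measurable_comp_ceilGrid (fun v => S.a (S.X v ω)) s _).aestronglyMeasurable)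
    (.of_forall fun m => .of_forall fun u _ => S.abs_a_le_sum _) intervalIntegrable_const
    (.of_forall fun u _ => tendsto_const_nhds.congr' <|
      (S.eventually_X_ceilGrid ω s u hδ hδ₀).mono fun m hm => by simp only [hm])

lemma measurable_riemannA_gridX {s t : ℝ} (hst : s ≤ t) (m : ℕ) :
    Measurable[S.sigmaOn (Icc s t)]
      fun ω => S.riemannA ((t - s) / (m + 1)) (S.gridX s t m ω) := by
  refine (measurable_of_countable (S.riemannA ((t - s) / (m + 1)))).comp
    (@measurable_pi_lambda Ω _ _ (S.sigmaOn _) _ _ fun r => S.measurable_X_sigmaOn ?_)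
  have hr : (r : ℝ) ≤ m + 1 := by exact_mod_cast Nat.lt_succ_iff.1 r.isLt
  have hδ : 0 ≤ (t - s) / (m + 1) := div_nonneg (sub_nonneg.2 hst) (by positivity)
  constructor
  · nlinarith [r.val.cast_nonneg (α := ℝ)]
  · calc s + r * ((t - s) / (m + 1)) ≤ s + (m + 1) * ((t - s) / (m + 1)) := by gcongr
      _ = t := by field_simp; ring

lemma measurable_intA_sigmaOn {s t : ℝ} (hst : s ≤ t) :
    Measurable[S.sigmaOn (Icc s t)] (S.intA s t) :=
  @measurable_of_tendsto_metrizable Ω ℝ (S.sigmaOn _) _ _ _ _ _ _ (S.measurable_riemannA_gridX hst)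
    (tendsto_pi_nhds.2 (S.tendsto_riemannA_gridX hst))

lemma measurable_intA {s t : ℝ} (hst : s ≤ t) : Measurable (S.intA s t) :=
  (S.measurable_intA_sigmaOn hst).mono (S.sigmaOn_le _) le_rfl

lemma map_X_add_const {n : ℕ} (ts : Fin n → ℝ) (h : ℝ) :
    S.P.map (fun ω k => S.X (ts k + h) ω) = S.P.map (fun ω k => S.X (ts k) ω) := by
  refine Measure.ext_iff_singleton.2 fun g => ?_
  rw [Measure.map_apply (measurable_pi_lambda _ fun k => S.hX_meas _) (measurableSet_singleton g),
    Measure.map_apply (measurable_pi_lambda _ fun k => S.hX_meas _) (measurableSet_singleton g)]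
  simpa [Set.preimage, funext_iff] using S.hX_stationary h n ts g

def intALaw (s t : ℝ) (k i : Fin N) : Measure ℝ :=
  (S.P.restrict ({ω | S.X s ω = k} ∩ {ω | S.X t ω = i})).map (S.intA s t)

instance isFiniteMeasure_intALaw (s t : ℝ) (k i : Fin N) : IsFiniteMeasure (S.intALaw s t k i) := by
  have := S.hP
  unfold intALaw
  infer_instance

lemma map_riemannA_restrict (s t : ℝ) (m : ℕ) (k i : Fin N) :
    (S.P.restrict ({ω | S.X s ω = k} ∩ {ω | S.X t ω = i})).map
        (fun ω => S.riemannA ((t - s) / (m + 1)) (S.gridX s t m ω))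
      = ((S.P.map (S.gridX s t m)).restrict {g | g 0 = k ∧ g (Fin.last _) = i}).map
          (S.riemannA ((t - s) / (m + 1))) := by
  have hW : Measurable (S.gridX s t m) := measurable_pi_lambda _ fun r => S.hX_meas _
  have hlast : s + ((m : ℝ) + 1) * ((t - s) / (m + 1)) = t := by
    field_simp; ring
  have hset : {ω | S.X s ω = k} ∩ {ω | S.X t ω = i}
      = S.gridX s t m ⁻¹' {g | g 0 = k ∧ g (Fin.last _) = i} := by
    ext ω; simp [gridX, hlast]
  rw [Measure.restrict_map hW (.of_discrete), Measure.map_map (measurable_of_countable _) hW, hset]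
  rfl

lemma intALaw_add_const {s t : ℝ} (hst : s ≤ t) (h : ℝ) (k i : Fin N) :
    S.intALaw (s + h) (t + h) k i = S.intALaw s t k i := by
  have := S.hP
  have hst' : s + h ≤ t + h := by linarith
  refine Measure.map_eq_map_of_tendsto
    (fun m => (S.measurable_riemannA_gridX hst' m).mono (S.sigmaOn_le _) le_rfl)
    (fun m => (S.measurable_riemannA_gridX hst m).mono (S.sigmaOn_le _) le_rfl)
    (S.tendsto_riemannA_gridX hst') (S.tendsto_riemannA_gridX hst) fun m => ?_
  have hgrid : S.gridX (s + h) (t + h) m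
      = fun ω (r : Fin (m + 2)) => S.X (s + r * ((t - s) / (m + 1)) + h) ω := by
    ext ω r; simp only [gridX]; ring_nf
  rw [S.map_riemannA_restrict, S.map_riemannA_restrict, hgrid,
    S.map_X_add_const (fun r : Fin (m + 2) => s + r * ((t - s) / (m + 1))),
    show t + h - (s + h) = t - s by ring]
  rfl

lemma restrict_eq_sum_restrict_X_eq (μ : Measure Ω) {E : Set Ω} (hE : MeasurableSet E) (s : ℝ) :
    μ.restrict E = ∑ k, μ.restrict (E ∩ {ω | S.X s ω = k}) := by
  have hU : E = ⋃ k, E ∩ {ω | S.X s ω = k} := by ext; simp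
  conv_lhs => rw [hU]
  rw [Measure.restrict_iUnion (fun k l hkl => Set.disjoint_left.2 fun ω h₁ h₂ =>
      hkl (h₁.2.symm.trans h₂.2)) (fun k => hE.inter (S.measurableSet_X_eq s k)),
    Measure.sum_fintype]

lemma smul_map_intA_pair {r s t : ℝ} (hrs : r ≤ s) (hst : s ≤ t) (i j k : Fin N) :
    ENNReal.ofReal (S.μ k) • (S.P.restrict ({ω | S.X r ω = j} ∩ {ω | S.X s ω = k} ∩
        {ω | S.X t ω = i})).map (fun ω => (S.intA s t ω, S.intA r s ω))
      = (S.intALaw s t k i).prod (S.intALaw r s j k) := by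
  have := S.hP
  have hpast := (S.measurable_intA_sigmaOn hrs).mono (S.sigmaOn_mono Icc_subset_Iic_self) le_rfl
  have hfuture := (S.measurable_intA_sigmaOn hst).mono (S.sigmaOn_mono Icc_subset_Ici_self) le_rfl
  have hpair := (S.measurable_intA hst).prodMk (S.measurable_intA hrs)
  refine (Measure.prod_eq fun U V hU hV => ?_).symm
  have key := S.measure_inter_inter_mul k
    ((S.measurableSet_sigmaOn_X_eq (mem_Iic.2 hrs) j).inter (hpast hV))
    ((S.measurableSet_sigmaOn_X_eq (mem_Ici.2 hst) i).inter (hfuture hU))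
  rw [Measure.smul_apply, Measure.map_apply hpair (hU.prod hV),
    Measure.restrict_apply (hpair (hU.prod hV)), intALaw, intALaw,
    Measure.map_apply (S.measurable_intA hst) hU, Measure.map_apply (S.measurable_intA hrs) hV,
    Measure.restrict_apply (S.measurable_intA hst hU),
    Measure.restrict_apply (S.measurable_intA hrs hV), ← S.hX_marginal s k, smul_eq_mul]
  rw [mul_comm (S.P {ω | S.X s ω = k}), mul_comm (S.P (S.intA s t ⁻¹' U ∩ _))]
  convert key using 3 <;> ext ω <;> simp only [mem_inter_iff, mem_preimage, mem_prod,
    mem_ofPred_eq] <;> tauto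

lemma intALaw_eq_sum_conv {r s t : ℝ} (hrs : r ≤ s) (hst : s ≤ t) (j i : Fin N) :
    S.intALaw r t j i
      = ∑ k, (ENNReal.ofReal (S.μ k))⁻¹ • (S.intALaw s t k i ∗ S.intALaw r s j k) := by
  have hE := (S.measurableSet_X_eq r j).inter (S.measurableSet_X_eq t i)
  rw [intALaw, S.restrict_eq_sum_restrict_X_eq _ hE s,
    Measure.map_finset_sum (S.measurable_intA (hrs.trans hst)).aemeasurable]
  refine Finset.sum_congr rfl fun k _ => ?_
  have hadd : S.intA r t
      = (fun p : ℝ × ℝ => p.1 + p.2) ∘ fun ω => (S.intA s t ω, S.intA r s ω) := by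
    ext ω; simp [← S.intA_add r s t ω, add_comm]
  have hk : ENNReal.ofReal (S.μ k) ≠ 0 := ENNReal.ofReal_ne_zero_iff.2 (S.hμ_pos k)
  rw [Measure.conv, ← S.smul_map_intA_pair hrs hst, Measure.map_smul, smul_smul,
    ENNReal.inv_mul_cancel hk ENNReal.ofReal_ne_top, one_smul, hadd,
    ← Measure.map_map measurable_add ((S.measurable_intA hst).prodMk (S.measurable_intA hrs))]
  rw [inter_right_comm]

lemma map_log_Phi_withDensity {t : ℝ} (ht : 0 ≤ t) (κ : ℝ) (i j : Fin N) :
    (((S.condP j).restrict {ω | S.X t ω = i}).withDensity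
        fun ω => ENNReal.ofReal (S.Phi 0 t ω ^ κ)).map (fun ω => Real.log (S.Phi 0 t ω))
      = (ENNReal.ofReal (S.μ j))⁻¹ • expTilt κ (S.intALaw 0 t j i) := by
  have hdens : (fun ω => ENNReal.ofReal (S.Phi 0 t ω ^ κ))
      = (fun x => ENNReal.ofReal (Real.exp (κ * x))) ∘ S.intA 0 t := by
    ext ω
    rw [Function.comp_apply, Phi, Real.rpow_def_of_pos (Real.exp_pos _), Real.log_exp, mul_comm]
    rfl
  simp only [S.log_Phi, hdens]
  rw [map_withDensity_comp _ (S.measurable_intA ht) (measurable_ofReal_exp_mul κ), condP,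
    ProbabilityTheory.cond, Measure.restrict_smul,
    Measure.restrict_restrict (S.measurableSet_X_eq t i), Measure.map_smul,
    withDensity_smul_measure, S.hX_marginal 0 j, inter_comm]
  rfl

lemma Fmeas_eq (κ : ℝ) (i j : Fin N) :
    Fmeas S κ i j = (ENNReal.ofReal (S.μ j))⁻¹ • expTilt κ (S.intALaw 0 1 j i) :=
  S.map_log_Phi_withDensity zero_le_one κ i j

lemma intALaw_self (s : ℝ) (j i : Fin N) :
    S.intALaw s s j i = if i = j then ENNReal.ofReal (S.μ j) • Measure.dirac 0 else 0 := by
  have hzero : S.intA s s = fun _ => 0 := by ext ω; simp [intA]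
  rw [intALaw, hzero, Measure.map_const, Measure.restrict_apply_univ]
  split_ifs with h
  · rw [h, inter_self, S.hX_marginal]
  · rw [show {ω | S.X s ω = j} ∩ {ω | S.X s ω = i} = ∅ by
      ext ω; simp only [mem_inter_iff, mem_ofPred_eq, mem_empty_iff_false, iff_false]
      rintro ⟨h₁, h₂⟩; exact h (h₂.symm.trans h₁)]
    simp

lemma Fn_eq_expTilt (κ : ℝ) (n : ℕ) (i j : Fin N) :
    Fn S κ n i j = (ENNReal.ofReal (S.μ j))⁻¹ • expTilt κ (S.intALaw 0 n j i) := by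
  induction n generalizing i j with
  | zero =>
    have hj : ENNReal.ofReal (S.μ j) ≠ 0 := ENNReal.ofReal_ne_zero_iff.2 (S.hμ_pos j)
    rw [Nat.cast_zero, S.intALaw_self]
    simp only [Fn]
    split_ifs
    · rw [expTilt_smul, expTilt_dirac_zero, smul_smul,
        ENNReal.inv_mul_cancel hj ENNReal.ofReal_ne_top, one_smul]
    · simp [expTilt]
  | succ n ih =>
    have hshift : ∀ k, S.intALaw n (n + 1) k i = S.intALaw 0 1 k i := fun k => by
      simpa [add_comm] using S.intALaw_add_const zero_le_one (n : ℝ) k i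
    rw [Fn, Nat.cast_succ, S.intALaw_eq_sum_conv n.cast_nonneg (le_add_of_nonneg_right zero_le_one),
      expTilt_sum, Finset.smul_sum]
    refine Finset.sum_congr rfl fun k _ => ?_
    rw [S.Fmeas_eq, ih, hshift, expTilt_smul, expTilt_conv, Measure.conv_smul_left,
      Measure.conv_smul_right, smul_smul, smul_smul, mul_comm]

end MSS

theorem Fn_eq_general {N : ℕ} {Ω : Type*} [MeasurableSpace Ω] (S : MSS N Ω)
    (κ : ℝ)
    (n : ℕ) (i j : Fin N) (t : ℝ) :
    Fn S κ n i j (Set.Iic t)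
      = ∫⁻ ω in {ω | Real.log (∏ m ∈ Finset.range n, S.Phi (m : ℝ) ((m : ℝ) + 1) ω) ≤ t
            ∧ S.X (n : ℝ) ω = i},
          ENNReal.ofReal ((∏ m ∈ Finset.range n, S.Phi (m : ℝ) ((m : ℝ) + 1) ω) ^ κ)
          ∂(S.condP j) := by
  have hlog : Measurable fun ω => Real.log (S.Phi 0 n ω) := by
    simpa only [S.log_Phi] using S.measurable_intA n.cast_nonneg
  simp only [S.prod_Phi]
  rw [S.Fn_eq_expTilt, ← S.map_log_Phi_withDensity n.cast_nonneg,
    Measure.map_apply hlog measurableSet_Iic, withDensity_apply _ (hlog measurableSet_Iic),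
    Measure.restrict_restrict (hlog measurableSet_Iic)]
  rfl

/-- **Lemma 1.** For all `n ≥ 1`, `i, j ∈ E` and `t ∈ ℝ`,
`F^{(n)}_{ij}(t) = E_j[(Φ_1⋯Φ_n)^κ 1_{log(Φ_1⋯Φ_n) ≤ t} 1_{X_n = i}]`. -/
theorem Fn_eq {N : ℕ} {Ω : Type*} [MeasurableSpace Ω] (S : MSS N Ω)
    (hα : ∑ i, S.a i * S.μ i < 0) (ha : ∃ i, 0 < S.a i)
    (κ : ℝ) (hκ : 0 < κ) (hκρ : specRad (S.A κ 1) = 1)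
    (n : ℕ) (hn : 1 ≤ n) (i j : Fin N) (t : ℝ) :
    Fn S κ n i j (Set.Iic t)
      = ∫⁻ ω in {ω | Real.log (∏ m ∈ Finset.range n, S.Phi (m : ℝ) ((m : ℝ) + 1) ω) ≤ t
            ∧ S.X (n : ℝ) ω = i},
          ENNReal.ofReal ((∏ m ∈ Finset.range n, S.Phi (m : ℝ) ((m : ℝ) + 1) ω) ^ κ)
          ∂(S.condP j) :=
  Fn_eq_general S κ n i j t
end
end

section
/- For every t > 0 and every n ≥ 1, P_μ( max_{1 ≤ j ≤ n} { R_1^j + Π_j · med_−((R_1^n − R_1^j)/Π_j) } > t ) ≤ 2 P_μ(R_1^n > t), where for each 1 ≤ j ≤ n, med_−((R_1^n − R_1^j)/Π_j) = min_{i∈E} m_{j,i} and m_{j,i} is any (fixed, deterministic) median of (R_1^n − R_1^j)/Π_j given X_{1−j} = i. -/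
/-!
Lévy–Ottaviani first-entry argument. Let `E_j` be the event of the maximum at index `j` and
`A_j = E_j \ ⋃_{j' < j} E_{j'}`. The event `A_j` is determined by the path on `[1 - j, ∞)` and
the noise `ξ_k`, `k ≥ 2 - j`, while
`(R_1^n - R_1^j) / Π_j = ∑_{j ≤ k < n} Φ_{1-j} ⋯ Φ_{2-k} b_{1-k}`
is determined by the path on `(-∞, 1 - j]` and the noise `ξ_k`, `k ≤ 1 - j`. By the Markov
property and the independence of the Gaussian noise, the two are independent given
`X_{1-j} = i`, so the median gives
`P(A_j, (R_1^n - R_1^j) / Π_j ≥ m_{j,i} | X_{1-j} = i) ≥ P(A_j | X_{1-j} = i) / 2`,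
and on that event `R_1^n > t`. Summing over `i` and over the disjoint `A_j` gives the factor `2`.
-/

open MeasureTheory ProbabilityTheory Filter

noncomputable section

open Set MeasurableSpace Topology
open scoped ENNReal

section FirstEntry

variable {Ω : Type*} [MeasurableSpace Ω] {μ : Measure Ω}

theorem measure_iUnion_le_mul_of_disjointed {E : ℕ → Set Ω} (hE : ∀ k, MeasurableSet (E k))
    {F : Set Ω} (hF : MeasurableSet F) (c : ℝ≥0∞)
    (h : ∀ k, μ (disjointed E k) ≤ c * μ (disjointed E k ∩ F)) :
    μ (⋃ k, E k) ≤ c * μ F :=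
  calc μ (⋃ k, E k) = ∑' k, μ (disjointed E k) := by
        rw [← iUnion_disjointed, measure_iUnion (disjoint_disjointed E) (.disjointed hE)]
    _ ≤ ∑' k, c * μ (disjointed E k ∩ F) := ENNReal.tsum_le_tsum h
    _ = c * μ (⋃ k, disjointed E k ∩ F) := by
        rw [ENNReal.tsum_mul_left, measure_iUnion
          (fun k l hkl => (disjoint_disjointed E hkl).mono inter_subset_left inter_subset_left)
          fun k => (MeasurableSet.disjointed hE k).inter hF]
    _ ≤ c * μ F := by gcongr; exact iUnion_subset fun k => inter_subset_right

theorem measure_eq_sum_measure_fiber_inter {ι : Type*} [Fintype ι] [MeasurableSpace ι]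
    [MeasurableSingletonClass ι] {Y : Ω → ι} (hY : Measurable Y) (A : Set Ω) :
    μ A = ∑ i, μ (Y ⁻¹' {i} ∩ A) := by
  rw [← Measure.restrict_apply_univ, ← preimage_univ (f := Y), ← Finset.coe_univ,
    ← sum_measure_preimage_singleton _ fun i _ => hY (measurableSet_singleton i)]
  exact Finset.sum_congr rfl fun i _ => Measure.restrict_apply (hY (measurableSet_singleton i))

theorem measure_le_two_mul_of_cond_median {ι : Type*} [Fintype ι] [MeasurableSpace ι]
    [MeasurableSingletonClass ι] [IsFiniteMeasure μ] {Y : Ω → ι} (hY : Measurable Y)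
    (A : Set Ω) (H : ι → Set Ω)
    (hindep : ∀ i, μ[A ∩ H i | Y ⁻¹' {i}] = μ[A | Y ⁻¹' {i}] * μ[H i | Y ⁻¹' {i}])
    (hhalf : ∀ i, 1 / 2 ≤ μ[H i | Y ⁻¹' {i}]) :
    μ A ≤ 2 * μ (A ∩ {ω | ω ∈ H (Y ω)}) := by
  rw [measure_eq_sum_measure_fiber_inter hY A, measure_eq_sum_measure_fiber_inter hY,
    Finset.mul_sum]
  refine Finset.sum_le_sum fun i _ => ?_
  have hB := hY (measurableSet_singleton i)
  have hfiber : Y ⁻¹' {i} ∩ (A ∩ {ω | ω ∈ H (Y ω)}) = Y ⁻¹' {i} ∩ (A ∩ H i) := by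
    ext ω
    simp only [mem_inter_iff, mem_preimage, mem_singleton_iff, mem_ofPred_eq]
    constructor <;> rintro ⟨rfl, h⟩ <;> exact ⟨rfl, h⟩
  have hone : (1 : ℝ≥0∞) ≤ 2 * μ[H i | Y ⁻¹' {i}] :=
    calc (1 : ℝ≥0∞) = 2 * (1 / 2) := by
          rw [one_div, ENNReal.mul_inv_cancel two_ne_zero ENNReal.ofNat_ne_top]
      _ ≤ 2 * μ[H i | Y ⁻¹' {i}] := by gcongr; exact hhalf i
  calc μ (Y ⁻¹' {i} ∩ A) = μ[A | Y ⁻¹' {i}] * 1 * μ (Y ⁻¹' {i}) := by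
        rw [mul_one, cond_mul_eq_inter hB]
    _ ≤ μ[A | Y ⁻¹' {i}] * (2 * μ[H i | Y ⁻¹' {i}]) * μ (Y ⁻¹' {i}) := by gcongr
    _ = 2 * (μ[A ∩ H i | Y ⁻¹' {i}] * μ (Y ⁻¹' {i})) := by rw [hindep]; ring
    _ = 2 * μ (Y ⁻¹' {i} ∩ (A ∩ {ω | ω ∈ H (Y ω)})) := by rw [cond_mul_eq_inter hB, hfiber]

end FirstEntry

section Independence

variable {Ω : Type*}

theorem isPiSystem_image2_inter (m₁ m₂ : MeasurableSpace Ω) :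
    IsPiSystem (image2 (· ∩ ·) {s | MeasurableSet[m₁] s} {s | MeasurableSet[m₂] s}) := by
  rintro _ ⟨a, ha, c, hc, rfl⟩ _ ⟨a', ha', c', hc', rfl⟩ -
  exact ⟨a ∩ a', ha.inter ha', c ∩ c', hc.inter hc', (inter_inter_inter_comm a c a' c').symm⟩

theorem generateFrom_image2_inter (m₁ m₂ : MeasurableSpace Ω) :
    generateFrom (image2 (· ∩ ·) {s | MeasurableSet[m₁] s} {s | MeasurableSet[m₂] s}) =
      m₁ ⊔ m₂ := by
  refine le_antisymm (generateFrom_le ?_) (sup_le ?_ ?_)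
  · rintro _ ⟨a, ha, c, hc, rfl⟩
    exact (le_sup_left (b := m₂) _ ha).inter (le_sup_right (a := m₁) _ hc)
  · exact fun a ha => measurableSet_generateFrom ⟨a, ha, univ, .univ, inter_univ a⟩
  · exact fun c hc => measurableSet_generateFrom ⟨univ, .univ, c, hc, univ_inter c⟩

theorem indep_sup_sup_cond {M N m₁ m₂ n₁ n₂ : MeasurableSpace Ω} {mΩ : MeasurableSpace Ω}
    {μ : Measure Ω} [IsFiniteMeasure μ] (hM : M ≤ mΩ) (hN : N ≤ mΩ) (hm₁ : m₁ ≤ M) (hm₂ : m₂ ≤ M)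
    (hn₁ : n₁ ≤ N) (hn₂ : n₂ ≤ N) (hMN : Indep M N μ) {B : Set Ω} (hB : MeasurableSet[M] B)
    (hm : Indep m₁ m₂ μ[|B]) (hn : Indep n₁ n₂ μ) :
    Indep (m₁ ⊔ n₁) (m₂ ⊔ n₂) μ[|B] := by
  have hBm := hM _ hB
  have hMN' := (Indep_iff _ _ _).mp hMN
  refine IndepSets.indep (sup_le (hm₁.trans hM) (hn₁.trans hN))
    (sup_le (hm₂.trans hM) (hn₂.trans hN)) (isPiSystem_image2_inter _ _)
    (isPiSystem_image2_inter _ _) (generateFrom_image2_inter _ _).symm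
    (generateFrom_image2_inter _ _).symm ((IndepSets_iff _ _ _).mpr ?_)
  rintro _ _ ⟨a, ha, c, hc, rfl⟩ ⟨a', ha', c', hc', rfl⟩
  have hsplit : ∀ {a c : Set Ω}, MeasurableSet[M] a → MeasurableSet[N] c →
      μ[a ∩ c | B] = μ[a | B] * μ c := fun {a c} ha hc => by
    rw [cond_apply hBm, cond_apply hBm, ← inter_assoc, hMN' _ _ (hB.inter ha) hc, mul_assoc]
  rw [inter_inter_inter_comm,
    hsplit ((hm₁ _ ha).inter (hm₂ _ ha')) ((hn₁ _ hc).inter (hn₂ _ hc')),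
    hsplit (hm₁ _ ha) (hn₁ _ hc), hsplit (hm₂ _ ha') (hn₂ _ hc'),
    (Indep_iff _ _ _).mp hm _ _ ha ha', (Indep_iff _ _ _).mp hn _ _ hc hc']
  ring

theorem cond_inter_eq_mul_of_measureReal {mΩ : MeasurableSpace Ω} {μ : Measure Ω}
    [IsFiniteMeasure μ] {B s t : Set Ω} (hB : MeasurableSet B) (hB0 : μ B ≠ 0)
    (h : μ.real (B ∩ (s ∩ t)) * μ.real B = μ.real (B ∩ s) * μ.real (B ∩ t)) :
    μ[s ∩ t | B] = μ[s | B] * μ[t | B] := by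
  have h' : μ (B ∩ (s ∩ t)) * μ B = μ (B ∩ s) * μ (B ∩ t) := by
    simp only [measureReal_def, ← ENNReal.toReal_mul] at h
    exact (ENNReal.toReal_eq_toReal_iff' (by finiteness) (by finiteness)).mp h
  have hinv : (μ B)⁻¹ * μ B = 1 := ENNReal.inv_mul_cancel hB0 (measure_ne_top μ B)
  rw [cond_apply hB, cond_apply hB, cond_apply hB]
  calc (μ B)⁻¹ * μ (B ∩ (s ∩ t)) = (μ B)⁻¹ * (μ B)⁻¹ * (μ (B ∩ (s ∩ t)) * μ B) := by
        rw [mul_assoc (μ B)⁻¹, mul_left_comm _ _ (μ B), ← mul_assoc _ _ (μ B), mul_assoc,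
          hinv, mul_one]
    _ = (μ B)⁻¹ * μ (B ∩ s) * ((μ B)⁻¹ * μ (B ∩ t)) := by rw [h']; ring

end Independence

section JointMeasurability

variable {α β : Type*} {mα : MeasurableSpace α}

theorem measurable_uncurry_of_continuousWithinAt_Ici [TopologicalSpace β]
    [TopologicalSpace.PseudoMetrizableSpace β] [MeasurableSpace β] [BorelSpace β]
    {W : ℝ → α → β} (hW : ∀ u, Measurable (W u))
    (hrc : ∀ a u, ContinuousWithinAt (W · a) (Ici u) u) :
    Measurable (Function.uncurry W) := by
  -- `s m u` is the first point of the grid `ℤ / (m + 1)` strictly to the right of `u`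
  set s : ℕ → ℝ → ℝ := fun m u => (⌊(m + 1 : ℝ) * u⌋ + 1) / (m + 1)
  have hs : ∀ u, Tendsto (s · u) atTop (𝓝[≥] u) := by
    intro u
    have hlo : ∀ m : ℕ, u ≤ s m u := fun m => by
      rw [le_div_iff₀ (by positivity)]
      linarith [Int.lt_floor_add_one ((m + 1 : ℝ) * u)]
    have hhi : ∀ m : ℕ, s m u ≤ u + 1 / (m + 1) := fun m => by
      have hm : (0 : ℝ) < m + 1 := by positivity
      have e : (u + 1 / (m + 1)) * (m + 1) = (m + 1) * u + 1 := by field_simp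
      rw [div_le_iff₀ hm, e]
      linarith [Int.floor_le ((m + 1 : ℝ) * u)]
    refine tendsto_nhdsWithin_iff.mpr ⟨?_, .of_forall hlo⟩
    refine tendsto_of_tendsto_of_tendsto_of_le_of_le tendsto_const_nhds ?_ hlo hhi
    simpa using tendsto_one_div_add_atTop_nhds_zero_nat.const_add u
  have hlim : Tendsto (fun m (p : ℝ × α) => W (s m p.1) p.2) atTop (𝓝 (Function.uncurry W)) :=
    tendsto_pi_nhds.mpr fun p => (hrc p.2 p.1).tendsto.comp (hs p.1)
  refine measurable_of_tendsto_metrizable (fun m => ?_) hlim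
  have hgrid : Measurable fun q : α × ℤ => W ((q.2 + 1) / (m + 1)) q.1 :=
    measurable_from_prod_countable_left fun k => hW ((k + 1) / (m + 1))
  exact hgrid.comp (measurable_snd.prodMk ((measurable_const.mul measurable_fst).floor))

theorem measurable_comp_projIcc_of_rightConstant [MeasurableSpace β] {Y : ℝ → α → β}
    {f : β → ℝ} (hf : Measurable f) {c d : ℝ} (hcd : c ≤ d)
    (hY : ∀ u ∈ Icc c d, Measurable (Y u))
    (hrc : ∀ a u, ∃ ε > 0, ∀ v ∈ Ico u (u + ε), Y v a = Y u a) :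
    Measurable fun p : α × ℝ => f (Y (projIcc c d hcd p.2) p.1) := by
  refine (measurable_uncurry_of_continuousWithinAt_Ici
    (W := fun u a => f (Y (projIcc c d hcd u) a)) (fun u => hf.comp (hY _ (projIcc c d hcd u).2))
    fun a u => ?_).comp measurable_swap
  obtain ⟨ε, hε, hconst⟩ := hrc a (projIcc c d hcd u)
  refine continuousWithinAt_const.congr_of_eventuallyEq
    (eventually_of_mem (Ico_mem_nhdsGE (lt_add_of_pos_right u hε)) fun v hv => ?_) rfl
  have hmono : (projIcc c d hcd u : ℝ) ≤ projIcc c d hcd v := monotone_projIcc hcd hv.1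
  have hlip := abs_projIcc_sub_projIcc hcd (c := v) (d := u)
  rw [abs_of_nonneg (sub_nonneg.mpr hmono), abs_of_nonneg (sub_nonneg.mpr hv.1)] at hlip
  simp only
  rw [hconst _ ⟨hmono, by linarith [hv.2]⟩]

theorem Measurable.setIntegral_Ioc {F : α × ℝ → ℝ} (hF : Measurable F) (d : ℝ) :
    Measurable fun p : α × ℝ => ∫ v in Ioc p.2 d, F (p.1, v) := by
  have hG : Measurable fun q : (α × ℝ) × ℝ => (Ioc q.1.2 d).indicator (F ⟨q.1.1, ·⟩) q.2 := by
    refine Measurable.ite ?_ (hF.comp (measurable_fst.fst.prodMk measurable_snd)) measurable_const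
    exact (measurableSet_lt measurable_fst.snd measurable_snd).inter
      (measurableSet_le measurable_snd measurable_const)
  simp_rw [← integral_indicator measurableSet_Ioc]
  exact (hG.stronglyMeasurable.integral_prod_right' (ν := volume)).measurable

end JointMeasurability

namespace MSS

variable {N : ℕ} {Ω : Type*} [MeasurableSpace Ω] (S : MSS N Ω)

abbrev σX (I : Set ℝ) : MeasurableSpace Ω := ⨆ u ∈ I, MeasurableSpace.comap (S.X u) ⊤

theorem σX_le (I : Set ℝ) : S.σX I ≤ ‹MeasurableSpace Ω› :=
  iSup₂_le fun u _ => (S.hX_meas u).comap_le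

theorem σX_mono {I J : Set ℝ} (h : I ⊆ J) : S.σX I ≤ S.σX J := biSup_mono h

theorem measurable_X {I : Set ℝ} {u : ℝ} (hu : u ∈ I) : Measurable[S.σX I] (S.X u) :=
  Measurable.of_comap_le (le_biSup (fun u => MeasurableSpace.comap (S.X u) ⊤) hu)

theorem measurable_Phi {s t : ℝ} (hst : s ≤ t) {I : Set ℝ} (hI : Icc s t ⊆ I) :
    Measurable[S.σX I] (S.Phi s t) := by
  have hpath := measurable_comp_projIcc_of_rightConstant (mα := S.σX I) (measurable_of_finite S.a)
    hst (fun u hu => S.measurable_X (hI hu)) S.hX_rightcont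
  have hPhi : S.Phi s t =
      fun ω => Real.exp (∫ u in Ioc s t, S.a (S.X (projIcc s t hst u) ω)) := by
    refine funext fun ω => congrArg Real.exp ?_
    refine (intervalIntegral.integral_of_le hst).trans (setIntegral_congr_fun measurableSet_Ioc ?_)
    exact fun u hu => by simp [projIcc_of_mem hst (Ioc_subset_Icc_self hu)]
  rw [hPhi]
  exact Real.measurable_exp.comp ((hpath.setIntegral_Ioc t).comp
    (measurable_id.prodMk measurable_const))

theorem exists_measureReal_inter_eq_setIntegral (T : Finset ℝ) {s : ℝ} (hs : ∀ u ∈ T, s ≤ u)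
    {f : ℝ → Set Ω} (hf : ∀ u ∈ T, MeasurableSet[MeasurableSpace.comap (S.X u) ⊤] (f u)) :
    ∃ g : Fin N → ℝ, ∀ H, MeasurableSet[S.σX (Iic s)] H →
      S.P.real (H ∩ ⋂ u ∈ T, f u) = ∫ ω in H, g (S.X s ω) ∂S.P := by
  classical
  have := S.hP
  -- peel off the earliest time `a` and use the Markov property between `s` and `a`
  induction T using Finset.induction_on_min generalizing s with
  | empty => exact ⟨fun _ => 1, fun H _ => by simp⟩
  | insert a T haT ih =>
    obtain ⟨g, hg⟩ := ih (s := a) (fun u hu => (haT u hu).le)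
      (fun u hu => hf u (Finset.mem_insert_of_mem hu))
    obtain ⟨C, -, hC⟩ := hf a (Finset.mem_insert_self a T)
    have hsa : s ≤ a := hs a (Finset.mem_insert_self a T)
    have hm := S.σX_le (Iic s)
    have hHa : ∀ H, MeasurableSet[S.σX (Iic s)] H →
        MeasurableSet[S.σX (Iic a)] (H ∩ S.X a ⁻¹' C) := fun H hH =>
      (S.σX_mono (Iic_subset_Iic.mpr hsa) _ hH).inter
        (S.measurable_X self_mem_Iic trivial)
    let Q := Matrix.of fun i j => S.lam i * (S.q i j - if i = j then 1 else 0)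
    refine ⟨fun i => ∑ j, NormedSpace.exp ((a - s) • Q) i j * C.indicator g j, fun H hH => ?_⟩
    calc S.P.real (H ∩ ⋂ u ∈ insert a T, f u)
        = S.P.real ((H ∩ S.X a ⁻¹' C) ∩ ⋂ u ∈ T, f u) := by
          rw [Finset.set_biInter_insert, ← hC, inter_assoc]
      _ = ∫ ω in H, C.indicator g (S.X a ω) ∂S.P := by
          rw [hg _ (hHa H hH), ← setIntegral_indicator (S.hX_meas a trivial)]
          rfl
      _ = ∫ ω in H, S.P[fun ω => C.indicator g (S.X a ω) | S.σX (Iic s)] ω ∂S.P :=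
          (setIntegral_condExp hm
            (Integrable.of_finite.comp_measurable (g := C.indicator g) (S.hX_meas a)) hH).symm
      _ = _ := setIntegral_congr_ae (hm _ hH) <| by
          filter_upwards [S.hX_markov s a hsa (C.indicator g)] with ω hω _ using hω

theorem measure_X_eq_ne_zero (t : ℝ) (i : Fin N) : S.P {ω | S.X t ω = i} ≠ 0 := by
  rw [S.hX_marginal t i]
  exact (ENNReal.ofReal_pos.mpr (S.hμ_pos i)).ne'

theorem indep_σX_Ici_Iic_cond (s : ℝ) (i : Fin N) :
    Indep (S.σX (Ici s)) (S.σX (Iic s)) (S.P[|{ω | S.X s ω = i}]) := by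
  have := S.hP
  set B := {ω | S.X s ω = i}
  have hBs : MeasurableSet[S.σX (Iic s)] B :=
    S.measurable_X self_mem_Iic (measurableSet_singleton i)
  refine IndepSets.indep (S.σX_le _) (S.σX_le _)
    (isPiSystem_piiUnionInter _
      (fun u => @isPiSystem_measurableSet Ω (MeasurableSpace.comap (S.X u) ⊤)) _)
    (@isPiSystem_measurableSet Ω (S.σX (Iic s)))
    (generateFrom_piiUnionInter_measurableSet _ _).symm
    (@generateFrom_measurableSet Ω (S.σX (Iic s))).symm ((IndepSets_iff _ _ _).mpr ?_)
  rintro _ H ⟨T, hT, f, hf, rfl⟩ hH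
  obtain ⟨g, hg⟩ := S.exists_measureReal_inter_eq_setIntegral T (fun u hu => hT hu) hf
  have hgi : ∀ H', MeasurableSet[S.σX (Iic s)] H' →
      S.P.real ((H' ∩ B) ∩ ⋂ u ∈ T, f u) = g i * S.P.real (H' ∩ B) := fun H' hH' => by
    rw [hg _ (hH'.inter hBs), setIntegral_congr_fun (S.σX_le _ _ (hH'.inter hBs))
        (fun ω hω => congrArg g hω.2), setIntegral_const, smul_eq_mul, mul_comm]
  refine cond_inter_eq_mul_of_measureReal (S.σX_le _ _ hBs) (S.measure_X_eq_ne_zero s i) ?_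
  have hall := hgi univ MeasurableSet.univ
  rw [univ_inter] at hall
  rw [inter_comm (⋂ u ∈ T, f u) H, ← inter_assoc, inter_comm B H, hgi H hH, hall]
  ring

end MSS

namespace MSSN

variable {N : ℕ} {Ω : Type*} [MeasurableSpace Ω] (S : MSSN N Ω)

abbrev σξ (K : Set ℤ) : MeasurableSpace Ω :=
  ⨆ k ∈ K, MeasurableSpace.comap (S.ξ k) inferInstance

abbrev σXξ (I : Set ℝ) (K : Set ℤ) : MeasurableSpace Ω := S.σX I ⊔ S.σξ K

abbrev futureσ (j : ℕ) : MeasurableSpace Ω := S.σXξ (Ici (1 - j)) {k | 2 - (j : ℤ) ≤ k}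

abbrev pastσ (j : ℕ) : MeasurableSpace Ω := S.σXξ (Iic (1 - j)) {k | k ≤ 1 - (j : ℤ)}

theorem σXξ_le (I : Set ℝ) (K : Set ℤ) : S.σXξ I K ≤ ‹MeasurableSpace Ω› :=
  sup_le (S.σX_le I) (iSup₂_le fun k _ => (S.hξ_meas k).comap_le)

theorem measurable_Phin {I : Set ℝ} {k : ℤ} (hI : Icc ((k : ℝ) - 1) k ⊆ I) :
    Measurable[S.σX I] (S.Phin k) :=
  S.toMSS.measurable_Phi (by linarith) hI

theorem measurable_V {I : Set ℝ} {k : ℤ} (hI : Icc ((k : ℝ) - 1) k ⊆ I) :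
    Measurable[S.σX I] (S.V k) := by
  have hcd : (k : ℝ) - 1 ≤ k := by linarith
  have hpath := fun f : Fin N → ℝ =>
    measurable_comp_projIcc_of_rightConstant (mα := S.σX I) (measurable_of_finite f) hcd
      (fun u hu => S.measurable_X (hI hu)) S.hX_rightcont
  have hinner := Measurable.setIntegral_Ioc
    (F := fun p : Ω × ℝ => S.a (S.X (projIcc _ _ hcd p.2) p.1)) (hpath S.a) k
  have houter := Measurable.setIntegral_Ioc (F := fun p : Ω × ℝ =>
      Real.exp (2 * ∫ v in Ioc p.2 k, S.a (S.X (projIcc _ _ hcd v) p.1)) *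
        S.sig (S.X (projIcc _ _ hcd p.2) p.1) ^ 2)
    ((Real.measurable_exp.comp (measurable_const.mul hinner)).mul ((hpath S.sig).pow_const 2)) k
  have hV : S.V k = fun ω => ∫ u in Ioc ((k : ℝ) - 1) k,
      Real.exp (2 * ∫ v in Ioc u k, S.a (S.X (projIcc _ _ hcd v) ω)) *
        S.sig (S.X (projIcc _ _ hcd u) ω) ^ 2 := by
    refine funext fun ω => (intervalIntegral.integral_of_le hcd).trans
      (setIntegral_congr_fun measurableSet_Ioc fun u hu => ?_)
    have hv : ∀ v ∈ Ioc u k, S.a (S.X v ω) = S.a (S.X (projIcc _ _ hcd v) ω) := fun v hv => by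
      rw [projIcc_of_mem hcd ⟨hu.1.le.trans hv.1.le, hv.2⟩]
    simp only [intervalIntegral.integral_of_le hu.2, setIntegral_congr_fun measurableSet_Ioc hv,
      projIcc_of_mem hcd (Ioc_subset_Icc_self hu)]
  rw [hV]
  exact houter.comp (measurable_id.prodMk measurable_const)

theorem measurable_b {I : Set ℝ} {K : Set ℤ} {k : ℤ} (hI : Icc ((k : ℝ) - 1) k ⊆ I)
    (hK : k ∈ K) : Measurable[S.σXξ I K] (S.b k) :=
  (((S.measurable_V hI).sqrt).mono le_sup_left le_rfl).mul
    ((Measurable.of_comap_le (le_biSup (fun k => MeasurableSpace.comap (S.ξ k) inferInstance)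
      hK)).mono le_sup_right le_rfl)

theorem Pi_pos (k : ℕ) (ω : Ω) : 0 < S.Pi k ω :=
  Finset.prod_pos fun _ _ => Real.exp_pos _

theorem R1part_sub_div_Pi {j n : ℕ} (hjn : j ≤ n) (ω : Ω) :
    (S.R1part n ω - S.R1part j ω) / S.Pi j ω =
      ∑ k ∈ Finset.Ico j n, (∏ k' ∈ Finset.Ico j k, S.Phin (1 - k') ω) * S.b (1 - k) ω := by
  rw [R1part, R1part, ← Finset.sum_Ico_eq_sub _ hjn, Finset.sum_div]
  refine Finset.sum_congr rfl fun k hk => ?_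
  have hsplit : S.Pi k ω = S.Pi j ω * ∏ k' ∈ Finset.Ico j k, S.Phin (1 - k') ω :=
    (Finset.prod_range_mul_prod_Ico _ (Finset.mem_Ico.mp hk).1).symm
  rw [hsplit, mul_assoc, mul_div_cancel_left₀ _ (S.Pi_pos j ω).ne']

theorem Icc_sub_one_subset_Ici {j k : ℕ} (hk : k < j) :
    Icc (((1 - k : ℤ) : ℝ) - 1) ((1 - k : ℤ) : ℝ) ⊆ Ici (1 - (j : ℝ)) := fun v hv => by
  have : (k : ℝ) + 1 ≤ j := by exact_mod_cast hk
  push_cast at hv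
  exact mem_Ici.mpr (by linarith [hv.1])

theorem Icc_sub_one_subset_Iic {j k : ℕ} (hk : j ≤ k) :
    Icc (((1 - k : ℤ) : ℝ) - 1) ((1 - k : ℤ) : ℝ) ⊆ Iic (1 - (j : ℝ)) := fun v hv => by
  have : (j : ℝ) ≤ k := by exact_mod_cast hk
  push_cast at hv
  exact mem_Iic.mpr (by linarith [hv.2])

theorem futureσ_mono {j j' : ℕ} (h : j ≤ j') : S.futureσ j ≤ S.futureσ j' := by
  have : (j : ℝ) ≤ j' := by exact_mod_cast h
  refine sup_le_sup (S.σX_mono (Ici_subset_Ici.mpr (by linarith))) (biSup_mono fun k hk => ?_)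
  simp only [mem_ofPred_eq] at hk ⊢
  omega

theorem measurable_Pi_futureσ {j k : ℕ} (hkj : k ≤ j) : Measurable[S.futureσ j] (S.Pi k) :=
  (Finset.measurable_prod _ fun _ hk' => S.measurable_Phin
    (Icc_sub_one_subset_Ici ((Finset.mem_range.mp hk').trans_le hkj))).mono le_sup_left le_rfl

theorem measurable_R1part_futureσ (j : ℕ) : Measurable[S.futureσ j] (S.R1part j) :=
  Finset.measurable_sum _ fun k hk =>
    (S.measurable_Pi_futureσ (Finset.mem_range.mp hk).le).mul
      (S.measurable_b (Icc_sub_one_subset_Ici (Finset.mem_range.mp hk))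
        (by have := Finset.mem_range.mp hk; simp only [mem_ofPred_eq]; omega))

theorem measurable_R1part_sub_div_Pi_pastσ {j n : ℕ} (hjn : j ≤ n) :
    Measurable[S.pastσ j] fun ω => (S.R1part n ω - S.R1part j ω) / S.Pi j ω := by
  simp_rw [S.R1part_sub_div_Pi hjn]
  refine Finset.measurable_sum _ fun k hk => Measurable.mul ?_ ?_
  · exact (Finset.measurable_prod _ fun _ hk' => S.measurable_Phin
      (Icc_sub_one_subset_Iic (Finset.mem_Ico.mp hk').1)).mono le_sup_left le_rfl
  · exact S.measurable_b (Icc_sub_one_subset_Iic (Finset.mem_Ico.mp hk).1)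
      (by have := (Finset.mem_Ico.mp hk).1; simp only [mem_ofPred_eq]; omega)

theorem indep_futureσ_pastσ_cond (j : ℕ) (i : Fin N) :
    Indep (S.futureσ j) (S.pastσ j) (S.P[|{ω | S.X (1 - j) ω = i}]) := by
  have := S.hP
  have hσX : ∀ I, S.σX I ≤ ⨆ t, MeasurableSpace.comap (S.X t) ⊤ := fun I =>
    iSup₂_le fun t _ => le_iSup (fun t => MeasurableSpace.comap (S.X t) ⊤) t
  have hσξ : ∀ K, S.σξ K ≤ ⨆ k, MeasurableSpace.comap (S.ξ k) inferInstance := fun K =>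
    iSup₂_le fun k _ => le_iSup (fun k => MeasurableSpace.comap (S.ξ k) inferInstance) k
  have hdisj : Disjoint {k | 2 - (j : ℤ) ≤ k} {k | k ≤ 1 - (j : ℤ)} :=
    Set.disjoint_left.mpr fun k h₁ h₂ => by simp only [mem_ofPred_eq] at h₁ h₂; omega
  have hξ : Indep (S.σξ {k | 2 - (j : ℤ) ≤ k}) (S.σξ {k | k ≤ 1 - (j : ℤ)}) S.P :=
    indep_iSup_of_disjoint (fun k => (S.hξ_meas k).comap_le)
      ((iIndepFun_iff_iIndep _ _ _).mp S.hξ_iid) hdisj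
  have hB₀ : MeasurableSet[S.σX {1 - (j : ℝ)}] (S.X (1 - j) ⁻¹' {i}) :=
    S.measurable_X (mem_singleton _) (measurableSet_singleton i)
  have hB : MeasurableSet[⨆ t, MeasurableSpace.comap (S.X t) ⊤] {ω | S.X (1 - j) ω = i} :=
    hσX _ _ hB₀
  exact indep_sup_sup_cond (m₁ := S.σX (Ici (1 - j))) (m₂ := S.σX (Iic (1 - j)))
    (n₁ := S.σξ {k | 2 - (j : ℤ) ≤ k}) (n₂ := S.σξ {k | k ≤ 1 - (j : ℤ)})
    (iSup_le fun t => (S.hX_meas t).comap_le)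
    (iSup_le fun k => (S.hξ_meas k).comap_le) (hσX _) (hσX _) (hσξ _) (hσξ _) S.hξ_indepX.symm
    hB (S.indep_σX_Ici_Iic_cond _ i) hξ

theorem lt_R1part_of_le_median {t : ℝ} {j n : ℕ} {m : Fin N → ℝ} {i : Fin N} {ω : Ω}
    (hE : t < S.R1part j ω + S.Pi j ω * ⨅ i, m i)
    (hD : m i ≤ (S.R1part n ω - S.R1part j ω) / S.Pi j ω) : t < S.R1part n ω :=
  calc t < S.R1part j ω + S.Pi j ω * ⨅ i, m i := hE
    _ ≤ S.R1part j ω + S.Pi j ω * ((S.R1part n ω - S.R1part j ω) / S.Pi j ω) := by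
        gcongr
        · exact (S.Pi_pos j ω).le
        · exact (ciInf_le (Set.finite_range m).bddBelow i).trans hD
    _ = S.R1part n ω := by field_simp [(S.Pi_pos j ω).ne']; ring

def exceedanceEvent (t : ℝ) (n : ℕ) (m : ℕ → Fin N → ℝ) (j : ℕ) : Set Ω :=
  {ω | 1 ≤ j ∧ j ≤ n ∧ t < S.R1part j ω + S.Pi j ω * ⨅ i, m j i}

theorem measurableSet_exceedanceEvent (t : ℝ) (n : ℕ) (m : ℕ → Fin N → ℝ) {j j' : ℕ}
    (h : j ≤ j') : MeasurableSet[S.futureσ j'] (S.exceedanceEvent t n m j) := by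
  refine S.futureσ_mono h _ ?_
  simp only [exceedanceEvent, ofPred_and]
  exact (MeasurableSet.const _).inter <| (MeasurableSet.const _).inter <|
    measurableSet_lt measurable_const <|
      (S.measurable_R1part_futureσ j).add ((S.measurable_Pi_futureσ le_rfl).mul_const _)

theorem measure_disjointed_exceedanceEvent_le {t : ℝ} {n : ℕ} {m : ℕ → Fin N → ℝ} {j : ℕ}
    (hjn : j ≤ n) (hm : ∀ i : Fin N,
      IsCondMedian S.P {ω | S.X (1 - (j : ℝ)) ω = i}
        (fun ω => (S.R1part n ω - S.R1part j ω) / S.Pi j ω) (m j i)) :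
    S.P (disjointed (S.exceedanceEvent t n m) j) ≤
      2 * S.P (disjointed (S.exceedanceEvent t n m) j ∩ {ω | t < S.R1part n ω}) := by
  have := S.hP
  have hA : MeasurableSet[S.futureσ j] (disjointed (S.exceedanceEvent t n m) j) := by
    rw [disjointed_eq_inter_compl]
    exact (S.measurableSet_exceedanceEvent t n m le_rfl).inter <| .iInter fun j' => .iInter
      fun hj' => (S.measurableSet_exceedanceEvent t n m hj'.le).compl
  set A := disjointed (S.exceedanceEvent t n m) j
  calc S.P A ≤ 2 * S.P (A ∩ {ω | ω ∈ {ω' | m j (S.X (1 - j) ω) ≤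
          (S.R1part n ω' - S.R1part j ω') / S.Pi j ω'}}) :=
        measure_le_two_mul_of_cond_median (S.hX_meas _) _ _
          (fun i => (Indep_iff _ _ _).mp (S.indep_futureσ_pastσ_cond j i) _ _ hA
            (measurableSet_le measurable_const (S.measurable_R1part_sub_div_Pi_pastσ hjn)))
          fun i => (hm i).2
    _ ≤ 2 * S.P (A ∩ {ω | t < S.R1part n ω}) := by
        refine mul_le_mul_right (measure_mono ?_) 2
        rintro ω ⟨hωA, hωD⟩
        exact ⟨hωA, S.lt_R1part_of_le_median (disjointed_subset _ j hωA).2.2 hωD⟩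

end MSSN

theorem symmetrization_inequality_general {N : ℕ} {Ω : Type*} [MeasurableSpace Ω]
    (S : MSSN N Ω) (t : ℝ) (n : ℕ) (m : ℕ → Fin N → ℝ)
    (hm : ∀ j : ℕ, 1 ≤ j → j ≤ n → ∀ i : Fin N,
      IsCondMedian S.P {ω | S.X (1 - (j : ℝ)) ω = i}
        (fun ω => (S.R1part n ω - S.R1part j ω) / S.Pi j ω) (m j i)) :
    S.P {ω | ∃ j : ℕ, 1 ≤ j ∧ j ≤ n ∧
        t < S.R1part j ω + S.Pi j ω * (⨅ i : Fin N, m j i)}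
      ≤ 2 * S.P {ω | t < S.R1part n ω} := by
  have hunion : {ω | ∃ j : ℕ, 1 ≤ j ∧ j ≤ n ∧ t < S.R1part j ω + S.Pi j ω * ⨅ i, m j i} =
      ⋃ j, S.exceedanceEvent t n m j := by
    ext ω
    simp [MSSN.exceedanceEvent]
  have hF : MeasurableSet {ω | t < S.R1part n ω} :=
    measurableSet_lt measurable_const ((S.measurable_R1part_futureσ n).mono (S.σXξ_le _ _) le_rfl)
  rw [hunion]
  refine measure_iUnion_le_mul_of_disjointed
    (fun j => S.σXξ_le _ _ _ (S.measurableSet_exceedanceEvent t n m le_rfl)) hF 2 fun j => ?_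
  by_cases hj : 1 ≤ j ∧ j ≤ n
  · exact S.measure_disjointed_exceedanceEvent_le hj.2 (hm j hj.1 hj.2)
  · have hempty : disjointed (S.exceedanceEvent t n m) j = ∅ := subset_empty_iff.mp
      ((disjointed_subset _ j).trans fun ω hω => hj ⟨hω.1, hω.2.1⟩)
    simp [hempty]

/-- **Lemma 3 (symmetrization inequality).** For all `t > 0` and `n ≥ 1`, if for each
`1 ≤ j ≤ n` and `i ∈ E`, `m j i` is a median of `(R_1^n - R_1^j)/Π_j` given
`X_{1-j} = i`, then, with `med_- = min_i m j i`,
`P_μ(max_{1 ≤ j ≤ n} {R_1^j + Π_j med_-((R_1^n - R_1^j)/Π_j)} > t) ≤ 2 P_μ(R_1^n > t)`. -/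
theorem symmetrization_inequality {N : ℕ} {Ω : Type*} [MeasurableSpace Ω]
    (S : MSSN N Ω) (hα : ∑ i, S.a i * S.μ i < 0)
    (t : ℝ) (ht : 0 < t) (n : ℕ) (hn : 1 ≤ n) (m : ℕ → Fin N → ℝ)
    (hm : ∀ j : ℕ, 1 ≤ j → j ≤ n → ∀ i : Fin N,
      IsCondMedian S.P {ω | S.X (1 - (j : ℝ)) ω = i}
        (fun ω => (S.R1part n ω - S.R1part j ω) / S.Pi j ω) (m j i)) :
    S.P {ω | ∃ j : ℕ, 1 ≤ j ∧ j ≤ n ∧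
        t < S.R1part j ω + S.Pi j ω * (⨅ i : Fin N, m j i)}
      ≤ 2 * S.P {ω | t < S.R1part n ω} :=
  symmetrization_inequality_general S t n m hm
end
end
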